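/- The 3⊗3 Tiles UPB state ρ = (1/4)(I_9 − Σ_{i=1}^4 |ψ_i⟩⟨ψ_i| − |S⟩⟨S|), with ψ_1 = |0⟩(|0⟩−|1⟩)/√2, ψ_2 = |2⟩(|1⟩−|2⟩)/√2, ψ_3 = (|0⟩−|1⟩)|2⟩/√2, ψ_4 = (|1⟩−|2⟩)|0⟩/√2, S = (1/3)(|0⟩+|1⟩+|2⟩)(|0⟩+|1⟩+|2⟩), is entangled. -/

import Mathlib

open Matrix BigOperators Kronecker
open scoped ComplexOrder

/-- The rank-one projector `|v⟩⟨v|`. -/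
noncomputable def dyad {α : Type*} [Fintype α] (v : α → ℂ) : Matrix α α ℂ :=
  Matrix.vecMulVec v (star v)

/-- Partial trace over the second tensor factor. -/
noncomputable def ptraceB {m n : ℕ} (ρ : Matrix (Fin m × Fin n) (Fin m × Fin n) ℂ) :
    Matrix (Fin m) (Fin m) ℂ := fun i j => ∑ k : Fin n, ρ (i, k) (j, k)

/-- Partial trace over the first tensor factor. -/
noncomputable def ptraceA {m n : ℕ} (ρ : Matrix (Fin m × Fin n) (Fin m × Fin n) ℂ) :
    Matrix (Fin n) (Fin n) ℂ := fun i j => ∑ k : Fin m, ρ (k, i) (k, j)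

/-- A bipartite state is separable if it is a finite convex combination of
tensor products of density matrices. -/
def SepState {m n : ℕ} (ρ : Matrix (Fin m × Fin n) (Fin m × Fin n) ℂ) : Prop :=
  ∃ (d : ℕ) (q : Fin d → ℝ) (σ : Fin d → Matrix (Fin m) (Fin m) ℂ)
    (τ : Fin d → Matrix (Fin n) (Fin n) ℂ),
    (∀ i, 0 ≤ q i) ∧ (∑ i, q i = 1) ∧
    (∀ i, (σ i).PosSemidef ∧ (σ i).trace = 1) ∧
    (∀ i, (τ i).PosSemidef ∧ (τ i).trace = 1) ∧
    ρ = ∑ i, (q i : ℂ) • (σ i ⊗ₖ τ i)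

open Classical in
/-- Eigenvalues of a Hermitian matrix arranged in non-increasing order
(`eigsDesc A 0` is the largest eigenvalue); junk value otherwise. -/
noncomputable def eigsDesc {k : ℕ} (A : Matrix (Fin k) (Fin k) ℂ) : Fin k → ℝ :=
  if h : A.IsHermitian then fun i => (h.eigenvalues ∘ Tuple.sort h.eigenvalues) i.rev
  else fun _ => 0

/-- The `i`-th largest singular value of an `m × n` complex matrix,
`i : Fin (min m n)`. -/
noncomputable def singVal {m n : ℕ} (A : Matrix (Fin m) (Fin n) ℂ) (i : Fin (min m n)) : ℝ :=
  Real.sqrt (eigsDesc (Aᴴ * A) (Fin.castLE (min_le_right m n) i))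

open Classical in
/-- The largest eigenvalue of a Hermitian matrix; junk value otherwise. -/
noncomputable def lamMax {α : Type*} [Fintype α] [DecidableEq α] (A : Matrix α α ℂ) : ℝ :=
  if h : A.IsHermitian then ⨆ i, h.eigenvalues i else 0

/-- Frobenius (Hilbert–Schmidt) norm of a matrix. -/
noncomputable def frobNorm {m n : ℕ} (A : Matrix (Fin m) (Fin n) ℂ) : ℝ :=
  Real.sqrt ((Aᴴ * A).trace.re)

noncomputable def upb1 : Fin 3 × Fin 3 → ℂ := fun x =>
  if x = (0, 0) then ((Real.sqrt 2 : ℝ) : ℂ)⁻¹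
  else if x = (0, 1) then -((Real.sqrt 2 : ℝ) : ℂ)⁻¹ else 0

noncomputable def upb2 : Fin 3 × Fin 3 → ℂ := fun x =>
  if x = (2, 1) then ((Real.sqrt 2 : ℝ) : ℂ)⁻¹
  else if x = (2, 2) then -((Real.sqrt 2 : ℝ) : ℂ)⁻¹ else 0

noncomputable def upb3 : Fin 3 × Fin 3 → ℂ := fun x =>
  if x = (0, 2) then ((Real.sqrt 2 : ℝ) : ℂ)⁻¹
  else if x = (1, 2) then -((Real.sqrt 2 : ℝ) : ℂ)⁻¹ else 0

noncomputable def upb4 : Fin 3 × Fin 3 → ℂ := fun x =>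
  if x = (1, 0) then ((Real.sqrt 2 : ℝ) : ℂ)⁻¹
  else if x = (2, 0) then -((Real.sqrt 2 : ℝ) : ℂ)⁻¹ else 0

noncomputable def upbS : Fin 3 × Fin 3 → ℂ := fun _ => (1 / 3 : ℂ)

/-!
The five Tiles vectors are product vectors `aⱼ ⊗ bⱼ` annihilated by `ρ`, and any three of the
`aⱼ` (likewise of the `bⱼ`) span `ℂ³`. If `ρ = ∑ qᵢ σᵢ ⊗ τᵢ` were separable, a term with
`qᵢ ≠ 0` would satisfy `⟨aⱼ, σᵢ aⱼ⟩ ⟨bⱼ, τᵢ bⱼ⟩ = 0` for every `j`, since all terms of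
`⟨aⱼ ⊗ bⱼ, ρ (aⱼ ⊗ bⱼ)⟩ = 0` are nonnegative. So for each `j`, `σᵢ` kills `aⱼ` or `τᵢ` kills `bⱼ`;
as `5 > 2 + 2`, one of them kills three of its vectors, hence vanishes, contradicting `tr = 1`.
-/

section GeneralPosition

variable {V ι : Type*} [AddCommGroup V]

def InGeneralPosition (K : Type*) [Field K] [Module K V] (a : ι → V) : Prop :=
  ∀ s : Finset ι, Module.finrank K V ≤ s.card → Submodule.span K (a '' s) = ⊤

variable {K : Type*} [Field K] [Module K V]

lemma InGeneralPosition.comp {κ : Type*} {a : ι → V} (ha : InGeneralPosition K a)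
    {f : κ → ι} (hf : Function.Injective f) : InGeneralPosition K (a ∘ f) := by
  intro s hs
  simpa only [Finset.coe_map, Function.Embedding.coeFn_mk, Set.image_image,
    Function.comp_def] using ha (s.map ⟨f, hf⟩) (by simpa using hs)

lemma InGeneralPosition.linearMap_eq_zero {W : Type*} [AddCommGroup W] [Module K W]
    {a : ι → V} (ha : InGeneralPosition K a) {s : Finset ι}
    (hs : Module.finrank K V ≤ s.card) {f : V →ₗ[K] W} (hf : ∀ j ∈ s, f (a j) = 0) :
    f = 0 := by
  have hker : Submodule.span K (a '' s) ≤ LinearMap.ker f := by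
    rw [Submodule.span_le]
    rintro _ ⟨j, hj, rfl⟩
    exact hf j hj
  rwa [ha s hs, top_le_iff, LinearMap.ker_eq_top] at hker

variable {m : Type*} [Fintype m] [DecidableEq m]

lemma InGeneralPosition.matrix_eq_zero {a : ι → m → K} (ha : InGeneralPosition K a)
    {s : Finset ι} (hs : Fintype.card m ≤ s.card) {M : Matrix m m K}
    (hM : ∀ j ∈ s, M *ᵥ a j = 0) : M = 0 :=
  Matrix.toLin'.map_eq_zero_iff.1 <|
    ha.linearMap_eq_zero (by simpa using hs) (by simpa using hM)

lemma inGeneralPosition_of_det_ne_zero {a : ι → m → K}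
    (ha : ∀ f : m → ι, Function.Injective f → (Matrix.of fun i => a (f i)).det ≠ 0) :
    InGeneralPosition K a := by
  intro s hs
  obtain ⟨t, hts, ht⟩ := Finset.exists_subset_card_eq (s := s) (n := Fintype.card m)
    (by simpa using hs)
  let e : m ≃ t := Fintype.equivOfCardEq (by simpa using ht.symm)
  set f : m → ι := fun i => (e i : ι)
  have hf : Function.Injective f := Subtype.val_injective.comp e.injective
  have hrows : LinearIndependent K (Matrix.of fun i => a (f i)).row :=
    Matrix.linearIndependent_rows_iff_isUnit.2
      ((Matrix.isUnit_iff_isUnit_det _).2 (ha f hf).isUnit)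
  refine top_le_iff.1 ((hrows.span_eq_top_of_card_eq_finrank' (by simp)).symm.le.trans ?_)
  refine Submodule.span_mono ?_
  rintro _ ⟨i, rfl⟩
  exact ⟨f i, hts (e i).2, rfl⟩

end GeneralPosition

section Kronecker

variable {R m n : Type*} [CommSemiring R] [StarRing R] [Fintype m] [Fintype n]

def kronVec (a : m → R) (b : n → R) : m × n → R := fun x => a x.1 * b x.2

lemma star_kronVec_dotProduct_kronecker_mulVec (A : Matrix m m R) (B : Matrix n n R)
    (a : m → R) (b : n → R) :
    star (kronVec a b) ⬝ᵥ (A ⊗ₖ B) *ᵥ kronVec a b = (star a ⬝ᵥ A *ᵥ a) * (star b ⬝ᵥ B *ᵥ b) := by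
  simp only [dotProduct, Finset.sum_mul_sum, Fintype.sum_prod_type]
  refine Fintype.sum_congr _ _ fun i => Fintype.sum_congr _ _ fun k => ?_
  simp only [kronVec, mulVec, dotProduct, kroneckerMap_apply, Fintype.sum_prod_type,
    Pi.star_apply, star_mul', Finset.mul_sum, Finset.sum_mul]
  rw [Finset.sum_comm]
  congr! 2 with j _ l
  ring

end Kronecker

section Separable

variable {m n : ℕ}

lemma SepState.exists_factors {ρ : Matrix (Fin m × Fin n) (Fin m × Fin n) ℂ}
    (hρ : SepState ρ) :
    ∃ (σ : Matrix (Fin m) (Fin m) ℂ) (τ : Matrix (Fin n) (Fin n) ℂ),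
      σ ≠ 0 ∧ τ ≠ 0 ∧ ∀ a b, star (kronVec a b) ⬝ᵥ ρ *ᵥ kronVec a b = 0 →
        σ *ᵥ a = 0 ∨ τ *ᵥ b = 0 := by
  obtain ⟨d, q, σ, τ, hq, hq1, hσ, hτ, rfl⟩ := hρ
  obtain ⟨i, -, hi⟩ := Finset.exists_ne_zero_of_sum_ne_zero (hq1 ▸ one_ne_zero : ∑ i, q i ≠ 0)
  have ne_zero_of_trace {k : ℕ} {M : Matrix (Fin k) (Fin k) ℂ} (h : M.trace = 1) : M ≠ 0 := by
    rintro rfl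
    simp at h
  refine ⟨σ i, τ i, ne_zero_of_trace (hσ i).2, ne_zero_of_trace (hτ i).2, fun a b hab => ?_⟩
  have hterm (j : Fin d) : star (kronVec a b) ⬝ᵥ ((q j : ℂ) • (σ j ⊗ₖ τ j)) *ᵥ kronVec a b =
      q j * ((star a ⬝ᵥ σ j *ᵥ a) * (star b ⬝ᵥ τ j *ᵥ b)) := by
    rw [smul_mulVec, dotProduct_smul, star_kronVec_dotProduct_kronecker_mulVec, smul_eq_mul]
  have hnonneg (j : Fin d) : 0 ≤ q j * ((star a ⬝ᵥ σ j *ᵥ a) * (star b ⬝ᵥ τ j *ᵥ b)) :=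
    mul_nonneg (by exact_mod_cast hq j) <| mul_nonneg
      ((hσ j).1.dotProduct_mulVec_nonneg a) ((hτ j).1.dotProduct_mulVec_nonneg b)
  simp only [sum_mulVec, dotProduct_sum, hterm] at hab
  have hi0 := (Finset.sum_eq_zero_iff_of_nonneg fun j _ => hnonneg j).1 hab i (Finset.mem_univ i)
  rcases mul_eq_zero.1 ((mul_eq_zero.1 hi0).resolve_left (by exact_mod_cast hi)) with h | h
  · exact .inl (((hσ i).1.dotProduct_mulVec_zero_iff a).1 h)
  · exact .inr (((hτ i).1.dotProduct_mulVec_zero_iff b).1 h)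

theorem not_sepState_of_inGeneralPosition {ι : Type*} [Fintype ι]
    {ρ : Matrix (Fin m × Fin n) (Fin m × Fin n) ℂ} {a : ι → Fin m → ℂ} {b : ι → Fin n → ℂ}
    (ha : InGeneralPosition ℂ a) (hb : InGeneralPosition ℂ b)
    (hcard : m + n ≤ Fintype.card ι + 1)
    (hρ : ∀ j, star (kronVec (a j) (b j)) ⬝ᵥ ρ *ᵥ kronVec (a j) (b j) = 0) :
    ¬ SepState ρ := by
  classical
  intro hsep
  obtain ⟨σ, τ, hσ, hτ, hker⟩ := hsep.exists_factors
  let P := Finset.univ.filter fun j => σ *ᵥ a j = 0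
  let Q := Finset.univ.filter fun j => τ *ᵥ b j = 0
  have hP : P.card < m := by
    by_contra! h
    exact hσ (ha.matrix_eq_zero (by simpa using h) fun j hj => (Finset.mem_filter.1 hj).2)
  have hQ : Q.card < n := by
    by_contra! h
    exact hτ (hb.matrix_eq_zero (by simpa using h) fun j hj => (Finset.mem_filter.1 hj).2)
  have hcover : Finset.univ ⊆ P ∪ Q := fun j _ => by
    rcases hker _ _ (hρ j) with h | h <;> simp [P, Q, h]
  have := (Finset.card_le_card hcover).trans (Finset.card_union_le P Q)
  rw [Finset.card_univ] at this
  omega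

end Separable

section Dyad

variable {α : Type*} [Fintype α]

lemma dyad_smul (c : ℂ) (v : α → ℂ) :
    dyad (c • v) = (c * star c) • dyad v := by
  ext i j
  simp only [dyad, vecMulVec_apply, Pi.smul_apply, Pi.star_apply, star_smul, smul_eq_mul,
    Matrix.smul_apply]
  ring

lemma star_dotProduct_dyad_mulVec (u v : α → ℂ) :
    star v ⬝ᵥ dyad u *ᵥ v = star (star u ⬝ᵥ v) * (star u ⬝ᵥ v) := by
  rw [dyad, vecMulVec_mulVec, op_smul_eq_smul, dotProduct_smul, smul_eq_mul,
    star_dotProduct v u, mul_comm]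

lemma dyad_inv_sqrt_two_smul (v : α → ℂ) :
    dyad (((Real.sqrt 2 : ℝ) : ℂ)⁻¹ • v) = (2 : ℂ)⁻¹ • dyad v := by
  rw [dyad_smul, ← Complex.ofReal_inv, Complex.star_def, Complex.conj_ofReal,
    ← Complex.ofReal_mul, ← mul_inv, Real.mul_self_sqrt zero_le_two]
  norm_num

end Dyad

/-- Up to normalization, `tileA j ⊗ tileB j` is the `j`-th vector of `upb1, …, upb4, upbS`. -/
def tileA : Fin 5 → Fin 3 → ℂ := ![![1, 0, 0], ![0, 0, 1], ![1, -1, 0], ![0, 1, -1], ![1, 1, 1]]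

def tileB : Fin 5 → Fin 3 → ℂ := tileA ∘ ![2, 3, 1, 0, 4]

lemma inGeneralPosition_tileA : InGeneralPosition ℂ tileA := by
  refine inGeneralPosition_of_det_ne_zero fun f hf => ?_
  obtain ⟨i, j, k, rfl⟩ : ∃ i j k, f = ![i, j, k] :=
    ⟨f 0, f 1, f 2, by ext x; fin_cases x <;> rfl⟩
  have hij : i ≠ j := hf.ne (a₁ := 0) (a₂ := 1) (by decide)
  have hik : i ≠ k := hf.ne (a₁ := 0) (a₂ := 2) (by decide)
  have hjk : j ≠ k := hf.ne (a₁ := 1) (a₂ := 2) (by decide)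
  rw [Matrix.det_fin_three]
  fin_cases i <;> fin_cases j <;> fin_cases k <;> simp_all [tileA] <;> norm_num

lemma inGeneralPosition_tileB : InGeneralPosition ℂ tileB :=
  inGeneralPosition_tileA.comp (by decide)

def tileVec (j : Fin 5) : Fin 3 × Fin 3 → ℂ := kronVec (tileA j) (tileB j)

lemma star_tileVec_dotProduct (j k : Fin 5) :
    star (tileVec j) ⬝ᵥ tileVec k = if j = k then (if j = 4 then 9 else 2) else 0 := by
  fin_cases j <;> fin_cases k <;>
    simp [tileVec, kronVec, tileA, tileB, dotProduct, Fintype.sum_prod_type,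
      Fin.sum_univ_three] <;>
    norm_num

lemma upb1_eq : upb1 = ((Real.sqrt 2 : ℝ) : ℂ)⁻¹ • tileVec 0 := by
  ext x; fin_cases x <;> simp [upb1, tileVec, kronVec, tileA, tileB]

lemma upb2_eq : upb2 = ((Real.sqrt 2 : ℝ) : ℂ)⁻¹ • tileVec 1 := by
  ext x; fin_cases x <;> simp [upb2, tileVec, kronVec, tileA, tileB]

lemma upb3_eq : upb3 = ((Real.sqrt 2 : ℝ) : ℂ)⁻¹ • tileVec 2 := by
  ext x; fin_cases x <;> simp [upb3, tileVec, kronVec, tileA, tileB]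

lemma upb4_eq : upb4 = ((Real.sqrt 2 : ℝ) : ℂ)⁻¹ • tileVec 3 := by
  ext x; fin_cases x <;> simp [upb4, tileVec, kronVec, tileA, tileB]

lemma upbS_eq : upbS = (3 : ℂ)⁻¹ • tileVec 4 := by
  ext x; fin_cases x <;> simp [upbS, tileVec, kronVec, tileA, tileB]

lemma tiles_quadForm_tileVec_eq_zero (j : Fin 5) :
    star (tileVec j) ⬝ᵥ ((1 / 4 : ℂ) •
      ((1 : Matrix (Fin 3 × Fin 3) (Fin 3 × Fin 3) ℂ) -
        (dyad upb1 + dyad upb2 + dyad upb3 + dyad upb4) - dyad upbS)) *ᵥ tileVec j = 0 := by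
  rw [upb1_eq, upb2_eq, upb3_eq, upb4_eq, upbS_eq, dyad_inv_sqrt_two_smul,
    dyad_inv_sqrt_two_smul, dyad_inv_sqrt_two_smul, dyad_inv_sqrt_two_smul, dyad_smul]
  simp only [sub_mulVec, add_mulVec, smul_mulVec, one_mulVec,
    dotProduct_sub, dotProduct_add, dotProduct_smul, star_dotProduct_dyad_mulVec,
    star_tileVec_dotProduct]
  fin_cases j <;> norm_num [Fin.ext_iff]

/-- The `3 ⊗ 3` Tiles UPB bound-entangled state is entangled. -/
theorem stmt16 :
    ¬ SepState ((1 / 4 : ℂ) •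
      ((1 : Matrix (Fin 3 × Fin 3) (Fin 3 × Fin 3) ℂ) -
        (dyad upb1 + dyad upb2 + dyad upb3 + dyad upb4) - dyad upbS)) :=
  not_sepState_of_inGeneralPosition inGeneralPosition_tileA inGeneralPosition_tileB
    (by simp) tiles_quadForm_tileVec_eq_zero
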